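/- arXiv:1011.1809 — 7 statements merged into one kernel-verified Lean document; each statement's English description precedes it below -/
import Mathlib

section
/- Let Q be a finite quiver with positive rank function n and R-charge function R : A → ℝ satisfying both the gauge anomaly condition and the NSVZ condition. Then the rank vector Ψ ∈ ℝ^V with components Ψ_v = n_v is a null vector of the matrix D⁽¹⁾, i.e. D⁽¹⁾ Ψ = 0. -/
open Finset Matrix

lemma sum_pick {V A : Type*} [Fintype V] [Fintype A] [DecidableEq V]
    (p : A → Prop) [DecidablePred p] (q : A → V) (c : A → ℝ) (f : V → ℝ) :
    ∑ w : V, (∑ a : A, if p a ∧ q a = w then c a else 0) * f w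
      = ∑ a : A, if p a then c a * f (q a) else 0 := by
  simp_rw [Finset.sum_mul]
  rw [Finset.sum_comm]
  refine Finset.sum_congr rfl fun a _ => ?_
  simp_rw [ite_and]
  by_cases hp : p a
  · simp [hp, ite_mul]
  · simp [hp]

/-- For a finite quiver with positive rank function and R-charges
satisfying the gauge anomaly and NSVZ conditions, the rank vector is a null
vector of `D⁽¹⁾`. -/
theorem rank_vector_null_of_D1
    {V A : Type*} [Fintype V] [Fintype A] [DecidableEq V]
    (h t : A → V) (n : V → ℕ) (hn : ∀ v, 0 < n v) (R : A → ℝ)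
    (anom : ∀ v : V, ∑ a : A, (if h a = v then (n (t a) : ℝ) else 0)
      = ∑ a : A, (if t a = v then (n (h a) : ℝ) else 0))
    (nsvz : ∀ v : V, 2 * (n v : ℝ)
      + (∑ a : A, if t a = v then (R a - 1) * (n (h a) : ℝ) else 0)
      + (∑ a : A, if h a = v then (R a - 1) * (n (t a) : ℝ) else 0) = 0)
    (D1 : Matrix V V ℝ)
    (hD1 : ∀ v w : V, D1 v w =
      2 * (if v = w then (1 : ℝ) else 0)
      + (∑ a : A, if t a = v ∧ h a = w then R a else 0)
      + ∑ a : A, if t a = w ∧ h a = v then R a - 2 else 0) :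
    D1 *ᵥ (fun v => (n v : ℝ)) = 0 := by
  funext v
  have key : (D1 *ᵥ (fun v => (n v : ℝ))) v
      = 2 * (n v : ℝ)
        + (∑ a : A, if t a = v then R a * (n (h a) : ℝ) else 0)
        + ∑ a : A, if h a = v then (R a - 2) * (n (t a) : ℝ) else 0 := by
    simp only [Matrix.mulVec, dotProduct]
    simp_rw [hD1 v, add_mul]
    rw [Finset.sum_add_distrib, Finset.sum_add_distrib]
    congr 1
    · congr 1
      · simp [mul_ite, Finset.sum_ite_eq]
      · exact sum_pick (fun a => t a = v) h R _
    · have := sum_pick (fun a => h a = v) t (fun a => R a - 2) (fun w => (n w : ℝ))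
      rw [← this]
      refine Finset.sum_congr rfl fun w _ => ?_
      congr 1
      refine Finset.sum_congr rfl fun a _ => ?_
      congr 1
      simp [and_comm]
  rw [key]
  have e1 : (∑ a : A, if t a = v then R a * (n (h a) : ℝ) else 0)
      = (∑ a : A, if t a = v then (R a - 1) * (n (h a) : ℝ) else 0)
        + ∑ a : A, (if t a = v then (n (h a) : ℝ) else 0) := by
    rw [← Finset.sum_add_distrib]
    refine Finset.sum_congr rfl fun a _ => ?_
    split <;> ring
  have e2 : (∑ a : A, if h a = v then (R a - 2) * (n (t a) : ℝ) else 0)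
      = (∑ a : A, if h a = v then (R a - 1) * (n (t a) : ℝ) else 0)
        - ∑ a : A, (if h a = v then (n (t a) : ℝ) else 0) := by
    rw [← Finset.sum_sub_distrib]
    refine Finset.sum_congr rfl fun a _ => ?_
    split <;> ring
  have := nsvz v
  have ha := anom v
  simp only [Pi.zero_apply]
  rw [e1, e2]
  linarith
end

section
/- Let Q be a finite quiver with positive rank function n and R-charge function R : A → ℝ satisfying both the gauge anomaly condition and the NSVZ condition. Then the rank vector Ψ with components Ψ_v = n_v satisfies Ψᵀ D⁽²⁾ Ψ = 0. -/
open Finset Matrix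

lemma weight_sum_t {V A : Type*} [Fintype V] [Fintype A] [DecidableEq V]
    (g : A → V) (n : V → ℝ) (c : A → ℝ) :
    ∑ v : V, n v * (∑ a : A, if g a = v then c a else 0)
      = ∑ a : A, n (g a) * c a := by
  have step : ∀ v : V, n v * (∑ a : A, if g a = v then c a else 0)
      = ∑ a : A, if g a = v then n v * c a else 0 := by
    intro v; rw [Finset.mul_sum]
    exact Finset.sum_congr rfl fun a _ => by split <;> simp
  simp only [step]
  rw [Finset.sum_comm]
  simp [Finset.sum_ite_eq]

lemma double_sum_ite_and {V : Type*} [Fintype V] [DecidableEq V] (x y : V) (f : V → V → ℝ) :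
    ∑ v : V, ∑ w : V, (if x = v ∧ y = w then f v w else 0) = f x y := by
  have step : ∀ v : V, (∑ w : V, if x = v ∧ y = w then f v w else 0)
      = if x = v then f v y else 0 := by
    intro v
    by_cases hx : x = v
    · subst hx; simp [Finset.sum_ite_eq]
    · simp [hx]
  simp [step, Finset.sum_ite_eq]

lemma triple_sum_arrow {V A : Type*} [Fintype V] [Fintype A] [DecidableEq V]
    (g1 g2 : A → V) (f : A → V → V → ℝ) :
    ∑ v : V, ∑ w : V, ∑ a : A, (if g1 a = v ∧ g2 a = w then f a v w else 0)
      = ∑ a : A, f a (g1 a) (g2 a) := by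
  have swap1 : ∀ v : V, (∑ w : V, ∑ a : A, if g1 a = v ∧ g2 a = w then f a v w else 0)
      = ∑ a : A, ∑ w : V, if g1 a = v ∧ g2 a = w then f a v w else 0 := fun v =>
    Finset.sum_comm
  simp only [swap1]
  rw [Finset.sum_comm]
  exact Finset.sum_congr rfl fun a _ => double_sum_ite_and (g1 a) (g2 a) (f a)

/-- For a finite quiver with positive rank function and R-charges
satisfying the gauge anomaly and NSVZ conditions, the rank vector `Ψ` satisfies
`Ψᵀ D⁽²⁾ Ψ = 0`. -/
theorem rank_vector_D2_quadratic_zero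
    {V A : Type*} [Fintype V] [Fintype A] [DecidableEq V]
    (h t : A → V) (n : V → ℕ) (hn : ∀ v, 0 < n v) (R : A → ℝ)
    (anom : ∀ v : V, ∑ a : A, (if h a = v then (n (t a) : ℝ) else 0)
      = ∑ a : A, (if t a = v then (n (h a) : ℝ) else 0))
    (nsvz : ∀ v : V, 2 * (n v : ℝ)
      + (∑ a : A, if t a = v then (R a - 1) * (n (h a) : ℝ) else 0)
      + (∑ a : A, if h a = v then (R a - 1) * (n (t a) : ℝ) else 0) = 0)
    (D2 : Matrix V V ℝ)
    (hD2 : ∀ v w : V, D2 v w =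
      -2 * (if v = w then (1 : ℝ) else 0)
      - (∑ a : A, if t a = v ∧ h a = w then R a ^ 2 / 2 else 0)
      + ∑ a : A, if t a = w ∧ h a = v then R a ^ 2 / 2 - 2 * R a + 2 else 0) :
    (fun v => (n v : ℝ)) ⬝ᵥ (D2 *ᵥ fun v => (n v : ℝ)) = 0 := by
  classical
  set N : V → ℝ := fun v => (n v : ℝ) with hN
  -- weighted NSVZ
  have key : ∑ v : V, N v * (2 * N v
      + (∑ a : A, if t a = v then (R a - 1) * N (h a) else 0)
      + (∑ a : A, if h a = v then (R a - 1) * N (t a) else 0)) = 0 := by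
    simp [nsvz, hN]
  have key2 : 2 * (∑ v : V, N v * N v)
      + 2 * (∑ a : A, (R a - 1) * (N (t a) * N (h a))) = 0 := by
    have e : ∑ v : V, N v * (2 * N v
        + (∑ a : A, if t a = v then (R a - 1) * N (h a) else 0)
        + (∑ a : A, if h a = v then (R a - 1) * N (t a) else 0))
      = (∑ v : V, N v * (2 * N v))
        + (∑ v : V, N v * (∑ a : A, if t a = v then (R a - 1) * N (h a) else 0))
        + (∑ v : V, N v * (∑ a : A, if h a = v then (R a - 1) * N (t a) else 0)) := by
      rw [← Finset.sum_add_distrib, ← Finset.sum_add_distrib]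
      exact Finset.sum_congr rfl fun v _ => by ring
    rw [e, weight_sum_t t N (fun a => (R a - 1) * N (h a)),
        weight_sum_t h N (fun a => (R a - 1) * N (t a))] at key
    rw [← key, Finset.mul_sum, Finset.mul_sum,
      show (∑ v : V, 2 * (N v * N v)) = ∑ v : V, N v * (2 * N v) from
        Finset.sum_congr rfl fun v _ => by ring,
      show (∑ a : A, 2 * ((R a - 1) * (N (t a) * N (h a))))
          = (∑ a : A, N (t a) * ((R a - 1) * N (h a)))
            + ∑ a : A, N (h a) * ((R a - 1) * N (t a)) from by
        rw [← Finset.sum_add_distrib]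
        exact Finset.sum_congr rfl fun a _ => by ring,
      add_assoc]
  -- expand the quadratic form
  have expand : (fun v => (n v : ℝ)) ⬝ᵥ (D2 *ᵥ fun v => (n v : ℝ))
      = ∑ v : V, ∑ w : V, N v * D2 v w * N w := by
    simp [dotProduct, mulVec, Finset.mul_sum, mul_assoc, hN]
  rw [expand]
  have hsplit : ∀ v w : V, N v * D2 v w * N w
      = (-2) * ((if v = w then (1:ℝ) else 0) * N v * N w)
        - (∑ a : A, if t a = v ∧ h a = w then N v * (R a ^ 2 / 2) * N w else 0)
        + (∑ a : A, if t a = w ∧ h a = v then N v * (R a ^ 2 / 2 - 2 * R a + 2) * N w else 0) := by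
    intro v w
    rw [hD2]
    have l1 : N v * (((-2 * if v = w then (1:ℝ) else 0)
        - ∑ a : A, if t a = v ∧ h a = w then R a ^ 2 / 2 else 0)
        + ∑ a : A, if t a = w ∧ h a = v then R a ^ 2 / 2 - 2 * R a + 2 else 0) * N w
      = (-2) * ((if v = w then (1:ℝ) else 0) * N v * N w)
        - (N v * (∑ a : A, if t a = v ∧ h a = w then R a ^ 2 / 2 else 0) * N w)
        + (N v * (∑ a : A, if t a = w ∧ h a = v then R a ^ 2 / 2 - 2 * R a + 2 else 0) * N w) := by
      ring
    rw [l1]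
    congr 1
    · congr 1
      rw [Finset.mul_sum, Finset.sum_mul]
      exact Finset.sum_congr rfl fun a _ => by split <;> ring
    · rw [Finset.mul_sum, Finset.sum_mul]
      exact Finset.sum_congr rfl fun a _ => by split <;> ring
  simp only [hsplit]
  have split2 : (∑ v : V, ∑ w : V,
      ((-2) * ((if v = w then (1:ℝ) else 0) * N v * N w)
        - (∑ a : A, if t a = v ∧ h a = w then N v * (R a ^ 2 / 2) * N w else 0)
        + (∑ a : A, if t a = w ∧ h a = v then N v * (R a ^ 2 / 2 - 2 * R a + 2) * N w else 0)))
    = (∑ v : V, ∑ w : V, (-2) * ((if v = w then (1:ℝ) else 0) * N v * N w))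
      - (∑ v : V, ∑ w : V, ∑ a : A, if t a = v ∧ h a = w then N v * (R a ^ 2 / 2) * N w else 0)
      + (∑ v : V, ∑ w : V, ∑ a : A, if t a = w ∧ h a = v then N v * (R a ^ 2 / 2 - 2 * R a + 2) * N w else 0) := by
    rw [← Finset.sum_sub_distrib, ← Finset.sum_add_distrib]
    refine Finset.sum_congr rfl fun v _ => ?_
    rw [← Finset.sum_sub_distrib, ← Finset.sum_add_distrib]
  rw [split2]
  have T1 : (∑ v : V, ∑ w : V, (-2) * ((if v = w then (1:ℝ) else 0) * N v * N w))
      = -2 * ∑ v : V, N v * N v := by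
    rw [Finset.mul_sum]
    refine Finset.sum_congr rfl fun v _ => ?_
    rw [Finset.sum_eq_single v (fun w _ hw => by simp [Ne.symm hw]) (by simp)]
    simp
  have T2 : (∑ v : V, ∑ w : V, ∑ a : A, if t a = v ∧ h a = w then N v * (R a ^ 2 / 2) * N w else 0)
      = ∑ a : A, N (t a) * (R a ^ 2 / 2) * N (h a) :=
    triple_sum_arrow t h (fun a v w => N v * (R a ^ 2 / 2) * N w)
  have T3 : (∑ v : V, ∑ w : V, ∑ a : A, if t a = w ∧ h a = v then N v * (R a ^ 2 / 2 - 2 * R a + 2) * N w else 0)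
      = ∑ a : A, N (h a) * (R a ^ 2 / 2 - 2 * R a + 2) * N (t a) := by
    rw [Finset.sum_comm]
    exact triple_sum_arrow t h (fun a v w => N w * (R a ^ 2 / 2 - 2 * R a + 2) * N v)
  rw [T1, T2, T3]
  have hCB : (∑ a : A, N (h a) * (R a ^ 2 / 2 - 2 * R a + 2) * N (t a))
      - (∑ a : A, N (t a) * (R a ^ 2 / 2) * N (h a))
      = -(2 * (∑ a : A, (R a - 1) * (N (t a) * N (h a)))) := by
    rw [← Finset.sum_sub_distrib, Finset.mul_sum, ← Finset.sum_neg_distrib]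
    exact Finset.sum_congr rfl fun a _ => by ring
  linear_combination hCB - key2
end

section
/- Let Q be a finite quiver with positive rank function n and R-charge function R : A → ℝ satisfying both the gauge anomaly condition and the NSVZ condition. Then the rank vector Ψ with components Ψ_v = n_v satisfies Ψᵀ D⁽³⁾ Ψ = (1/3) · ( Σ_{v∈V} n_v² + Σ_{a∈A} n_{t(a)} n_{h(a)} (R(a)−1)³ ), which equals (32/27)·a where a = (9/32)( Σ_{v∈V} n_v² + Σ_{a∈A} n_{t(a)} n_{h(a)} (R(a)−1)³ ) is the a-central charge of the quiver gauge theory. -/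
open Finset Matrix

/-- For a finite quiver with positive rank function and R-charges
satisfying the gauge anomaly and NSVZ conditions, `Ψᵀ D⁽³⁾ Ψ` equals
`(1/3)(Σ n_v² + Σ n_{t(a)} n_{h(a)} (R(a)−1)³)`, which is `(32/27)·a` for the
a-central charge `a = (9/32)(Σ n_v² + Σ n_{t(a)} n_{h(a)} (R(a)−1)³)`. -/
theorem rank_vector_D3_quadratic_eq_a_central_charge
    {V A : Type*} [Fintype V] [Fintype A] [DecidableEq V]
    (h t : A → V) (n : V → ℕ) (hn : ∀ v, 0 < n v) (R : A → ℝ)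
    (anom : ∀ v : V, ∑ a : A, (if h a = v then (n (t a) : ℝ) else 0)
      = ∑ a : A, (if t a = v then (n (h a) : ℝ) else 0))
    (nsvz : ∀ v : V, 2 * (n v : ℝ)
      + (∑ a : A, if t a = v then (R a - 1) * (n (h a) : ℝ) else 0)
      + (∑ a : A, if h a = v then (R a - 1) * (n (t a) : ℝ) else 0) = 0)
    (D3 : Matrix V V ℝ)
    (hD3 : ∀ v w : V, D3 v w =
      (4 / 3) * (if v = w then (1 : ℝ) else 0)
      + (∑ a : A, if t a = v ∧ h a = w then R a ^ 3 / 6 else 0)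
      + ∑ a : A, if t a = w ∧ h a = v then R a ^ 3 / 6 - R a ^ 2 + 2 * R a - 4 / 3 else 0)
    (aCharge : ℝ)
    (haCharge : aCharge = (9 / 32) * ((∑ v : V, (n v : ℝ) ^ 2)
      + ∑ a : A, (n (t a) : ℝ) * (n (h a) : ℝ) * (R a - 1) ^ 3)) :
    (fun v => (n v : ℝ)) ⬝ᵥ (D3 *ᵥ fun v => (n v : ℝ))
      = (1 / 3) * ((∑ v : V, (n v : ℝ) ^ 2)
        + ∑ a : A, (n (t a) : ℝ) * (n (h a) : ℝ) * (R a - 1) ^ 3)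
    ∧ (fun v => (n v : ℝ)) ⬝ᵥ (D3 *ᵥ fun v => (n v : ℝ)) = (32 / 27) * aCharge := by
  have collapse : ∀ (c : A → ℝ),
      (∑ v : V, ∑ w : V, (n v : ℝ) *
        ((∑ a : A, if t a = v ∧ h a = w then c a else 0) * (n w : ℝ)))
      = ∑ a : A, (n (t a) : ℝ) * (n (h a) : ℝ) * c a := by
    intro c
    have step : ∀ v w : V, (n v : ℝ) *
        ((∑ a : A, if t a = v ∧ h a = w then c a else 0) * (n w : ℝ))
        = ∑ a : A, if t a = v then (if h a = w then (n v : ℝ) * (c a * (n w : ℝ)) else 0) else 0 := by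
      intro v w
      rw [Finset.sum_mul, Finset.mul_sum]
      refine Finset.sum_congr rfl fun a _ => ?_
      by_cases h1 : t a = v <;> by_cases h2 : h a = w <;> simp [h1, h2] <;> ring
    simp_rw [step]
    rw [show (∑ v : V, ∑ w : V, ∑ a : A,
        if t a = v then (if h a = w then (n v : ℝ) * (c a * (n w : ℝ)) else 0) else 0)
      = ∑ v : V, ∑ a : A, ∑ w : V,
        if t a = v then (if h a = w then (n v : ℝ) * (c a * (n w : ℝ)) else 0) else 0 from
      Finset.sum_congr rfl fun v _ => Finset.sum_comm, Finset.sum_comm]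
    refine Finset.sum_congr rfl fun a _ => ?_
    simp [Finset.sum_ite_eq', Finset.sum_ite_eq]
    ring
  have collapse2 : ∀ (c : A → ℝ),
      (∑ v : V, ∑ w : V, (n v : ℝ) *
        ((∑ a : A, if t a = w ∧ h a = v then c a else 0) * (n w : ℝ)))
      = ∑ a : A, (n (t a) : ℝ) * (n (h a) : ℝ) * c a := by
    intro c
    rw [Finset.sum_comm, ← collapse c]
    refine Finset.sum_congr rfl fun v _ => Finset.sum_congr rfl fun w _ => ?_
    ring
  have key : (∑ v : V, (n v : ℝ) ^ 2)
      + ∑ a : A, (n (t a) : ℝ) * (n (h a) : ℝ) * (R a - 1) = 0 := by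
    have hsum : ∑ v : V, (n v : ℝ) * (2 * (n v : ℝ)
        + (∑ a : A, if t a = v then (R a - 1) * (n (h a) : ℝ) else 0)
        + (∑ a : A, if h a = v then (R a - 1) * (n (t a) : ℝ) else 0)) = 0 := by
      simp [nsvz]
    have e1 : ∑ v : V, (n v : ℝ) * ∑ a : A, (if t a = v then (R a - 1) * (n (h a) : ℝ) else 0)
        = ∑ a : A, (n (t a) : ℝ) * (n (h a) : ℝ) * (R a - 1) := by
      simp_rw [Finset.mul_sum, mul_ite, mul_zero]
      rw [Finset.sum_comm]
      refine Finset.sum_congr rfl fun a _ => ?_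
      simp only [Finset.sum_ite_eq, Finset.mem_univ, if_true]
      ring
    have e2 : ∑ v : V, (n v : ℝ) * ∑ a : A, (if h a = v then (R a - 1) * (n (t a) : ℝ) else 0)
        = ∑ a : A, (n (t a) : ℝ) * (n (h a) : ℝ) * (R a - 1) := by
      simp_rw [Finset.mul_sum, mul_ite, mul_zero]
      rw [Finset.sum_comm]
      refine Finset.sum_congr rfl fun a _ => ?_
      simp only [Finset.sum_ite_eq, Finset.mem_univ, if_true]
      ring
    simp_rw [mul_add] at hsum
    rw [Finset.sum_add_distrib, Finset.sum_add_distrib, e1, e2] at hsum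
    have h2 : ∑ v : V, (n v : ℝ) * (2 * (n v : ℝ)) = 2 * ∑ v : V, (n v : ℝ) ^ 2 := by
      rw [Finset.mul_sum]; exact Finset.sum_congr rfl fun v _ => by ring
    rw [h2] at hsum
    linarith
  have hLHS : (fun v => (n v : ℝ)) ⬝ᵥ (D3 *ᵥ fun v => (n v : ℝ))
      = (4/3) * (∑ v : V, (n v : ℝ) ^ 2)
        + ∑ a : A, (n (t a) : ℝ) * (n (h a) : ℝ) * (R a ^ 3 / 6)
        + ∑ a : A, (n (t a) : ℝ) * (n (h a) : ℝ) * (R a ^ 3 / 6 - R a ^ 2 + 2 * R a - 4/3) := by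
    simp only [dotProduct, mulVec]
    simp only [hD3, add_mul, mul_add, Finset.sum_add_distrib, Finset.mul_sum]
    rw [collapse, collapse2]
    congr 1
    congr 1
    have hd : ∀ v : V, ∑ w : V, (n v : ℝ) * ((4/3) * (if v = w then (1:ℝ) else 0) * (n w : ℝ))
        = (4/3) * (n v : ℝ) ^ 2 := by
      intro v
      simp [mul_ite, Finset.sum_ite_eq, sq]
      ring
    exact Finset.sum_congr rfl fun v _ => hd v
  have expand : ∑ a : A, (n (t a) : ℝ) * (n (h a) : ℝ) * (R a - 1) ^ 3
      = 3 * (∑ a : A, (n (t a) : ℝ) * (n (h a) : ℝ) * (R a ^ 3 / 6))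
        + 3 * (∑ a : A, (n (t a) : ℝ) * (n (h a) : ℝ) * (R a ^ 3 / 6 - R a ^ 2 + 2 * R a - 4/3))
        - 3 * ∑ a : A, (n (t a) : ℝ) * (n (h a) : ℝ) * (R a - 1) := by
    rw [Finset.mul_sum, Finset.mul_sum, Finset.mul_sum, ← Finset.sum_add_distrib,
      ← Finset.sum_sub_distrib]
    exact Finset.sum_congr rfl fun a _ => by ring
  constructor
  · rw [hLHS, expand]; linarith
  · rw [haCharge, hLHS, expand]; linarith
end

section
/- Let Q be a finite quiver with positive rank function n and R-charge function R : A → ℝ satisfying the gauge anomaly condition and the NSVZ condition. Let q : V → ℝ be a baryonic charge satisfying the vanishing baryonic anomalies Σ_{a∈A} n_{t(a)} n_{h(a)} (q(h(a)) − q(t(a))) = 0 and Σ_{a∈A} n_{t(a)} n_{h(a)} (R(a)−1)² (q(h(a)) − q(t(a))) = 0. Then the vector φ with components φ_v = n_v q(v) and the rank vector Ψ with components Ψ_v = n_v satisfy φᵀ D⁽²⁾ Ψ = 0. -/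
open Finset Matrix

private lemma collapse_sum {V A : Type*} [Fintype V] [Fintype A] [DecidableEq V]
    (t h : A → V) (g : A → V → V → ℝ) :
    (∑ x : V, ∑ i : V, ∑ b : A, if t b = x then if h b = i then g b x i else 0 else 0)
      = ∑ b : A, g b (t b) (h b) := by
  have h1 : ∀ b : A, (∑ x : V, ∑ i : V, if t b = x then if h b = i then g b x i else 0 else 0)
      = g b (t b) (h b) := by
    intro b; simp [Finset.sum_ite_eq]
  calc (∑ x : V, ∑ i : V, ∑ b : A, if t b = x then if h b = i then g b x i else 0 else 0)
      = ∑ x : V, ∑ b : A, ∑ i : V, (if t b = x then if h b = i then g b x i else 0 else 0) :=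
        Finset.sum_congr rfl fun x _ => Finset.sum_comm
    _ = ∑ b : A, ∑ x : V, ∑ i : V, (if t b = x then if h b = i then g b x i else 0 else 0) :=
        Finset.sum_comm
    _ = ∑ b : A, g b (t b) (h b) := Finset.sum_congr rfl fun b _ => h1 b

/-- Absence of mixing: for a baryonic charge `q` with vanishing
baryonic anomalies `Tr B = 0` and `Tr R² B = 0`, the baryonic vector
`φ_v = n_v q(v)` and the rank vector `Ψ_v = n_v` satisfy `φᵀ D⁽²⁾ Ψ = 0`. -/
theorem baryonic_D2_rank_orthogonal
    {V A : Type*} [Fintype V] [Fintype A] [DecidableEq V]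
    (h t : A → V) (n : V → ℕ) (hn : ∀ v, 0 < n v) (R : A → ℝ)
    (anom : ∀ v : V, ∑ a : A, (if h a = v then (n (t a) : ℝ) else 0)
      = ∑ a : A, (if t a = v then (n (h a) : ℝ) else 0))
    (nsvz : ∀ v : V, 2 * (n v : ℝ)
      + (∑ a : A, if t a = v then (R a - 1) * (n (h a) : ℝ) else 0)
      + (∑ a : A, if h a = v then (R a - 1) * (n (t a) : ℝ) else 0) = 0)
    (q : V → ℝ)
    (hbar : ∀ v : V, ∑ a : A, (if h a = v then (n (t a) : ℝ) * q (t a) else 0)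
      = ∑ a : A, (if t a = v then (n (h a) : ℝ) * q (h a) else 0))
    (hTrB : ∑ a : A, (n (t a) : ℝ) * (n (h a) : ℝ) * (q (h a) - q (t a)) = 0)
    (hTrR2B : ∑ a : A, (n (t a) : ℝ) * (n (h a) : ℝ) * (R a - 1) ^ 2 * (q (h a) - q (t a)) = 0)
    (D2 : Matrix V V ℝ)
    (hD2 : ∀ v w : V, D2 v w =
      -2 * (if v = w then (1 : ℝ) else 0)
      - (∑ a : A, if t a = v ∧ h a = w then R a ^ 2 / 2 else 0)
      + ∑ a : A, if t a = w ∧ h a = v then R a ^ 2 / 2 - 2 * R a + 2 else 0) :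
    (fun v => (n v : ℝ) * q v) ⬝ᵥ (D2 *ᵥ fun v => (n v : ℝ)) = 0 := by
  classical
  -- NSVZ summed against n_v q_v
  have E3 : 2 * (∑ v : V, (n v : ℝ) * q v * (n v : ℝ))
      + (∑ a : A, (R a - 1) * (n (h a) : ℝ) * ((n (t a) : ℝ) * q (t a)))
      + (∑ a : A, (R a - 1) * (n (t a) : ℝ) * ((n (h a) : ℝ) * q (h a))) = 0 := by
    have e0 : ∑ v : V, ((n v : ℝ) * q v) *
        (2 * (n v : ℝ)
        + (∑ a : A, if t a = v then (R a - 1) * (n (h a) : ℝ) else 0)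
        + (∑ a : A, if h a = v then (R a - 1) * (n (t a) : ℝ) else 0)) = 0 :=
      Finset.sum_eq_zero fun v _ => by rw [nsvz v, mul_zero]
    have e1 : ∑ v : V, ((n v : ℝ) * q v) *
        (∑ a : A, if t a = v then (R a - 1) * (n (h a) : ℝ) else 0)
        = ∑ a : A, (R a - 1) * (n (h a) : ℝ) * ((n (t a) : ℝ) * q (t a)) := by
      simp only [Finset.mul_sum, mul_ite, mul_zero]
      rw [Finset.sum_comm]
      simp only [Finset.sum_ite_eq, Finset.mem_univ, if_true]
      exact Finset.sum_congr rfl fun a _ => by ring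
    have e2 : ∑ v : V, ((n v : ℝ) * q v) *
        (∑ a : A, if h a = v then (R a - 1) * (n (t a) : ℝ) else 0)
        = ∑ a : A, (R a - 1) * (n (t a) : ℝ) * ((n (h a) : ℝ) * q (h a)) := by
      simp only [Finset.mul_sum, mul_ite, mul_zero]
      rw [Finset.sum_comm]
      simp only [Finset.sum_ite_eq, Finset.mem_univ, if_true]
      exact Finset.sum_congr rfl fun a _ => by ring
    simp only [mul_add, Finset.sum_add_distrib] at e0
    rw [e1, e2] at e0
    rw [← e0, Finset.mul_sum]
    congr 2
    exact Finset.sum_congr rfl fun v _ => by ring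
  -- expand the quadratic form
  have L : (fun v => (n v : ℝ) * q v) ⬝ᵥ (D2 *ᵥ fun v => (n v : ℝ))
      = -2 * (∑ v : V, (n v : ℝ) * q v * (n v : ℝ))
      - (∑ a : A, ((n (t a) : ℝ) * q (t a)) * (R a ^ 2 / 2) * (n (h a) : ℝ))
      + ∑ a : A, ((n (h a) : ℝ) * q (h a)) * (R a ^ 2 / 2 - 2 * R a + 2) * (n (t a) : ℝ) := by
    simp only [dotProduct, mulVec, hD2, ite_and]
    simp only [sub_mul, add_mul, mul_sub, mul_add, Finset.sum_sub_distrib,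
      Finset.sum_add_distrib, Finset.mul_sum, Finset.sum_mul, Finset.mul_sum]
    congr 1
    · congr 1
      · simp only [mul_ite, ite_mul, mul_zero, zero_mul, mul_one,
          Finset.sum_ite_eq, Finset.mem_univ, if_true]
        exact Finset.sum_congr rfl fun x _ => by ring
      · simp only [mul_ite, ite_mul, mul_zero, zero_mul]
        rw [collapse_sum t h (fun b x i => (n x : ℝ) * q x * (R b ^ 2 / 2 * (n i : ℝ)))]
        exact Finset.sum_congr rfl fun a _ => by ring
    · simp only [mul_ite, ite_mul, mul_zero, zero_mul]
      rw [Finset.sum_comm (f := fun x i => ∑ b : A,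
            if t b = i then if h b = x then (n x : ℝ) * q x * ((R b ^ 2 / 2 - 2 * R b + 2) * (n i : ℝ)) else 0 else 0)]
      rw [collapse_sum t h (fun b i x => (n x : ℝ) * q x * ((R b ^ 2 / 2 - 2 * R b + 2) * (n i : ℝ)))]
      simp only [← Finset.sum_sub_distrib, ← Finset.sum_add_distrib]
      exact Finset.sum_congr rfl fun a _ => by ring
  rw [L]
  -- termwise algebraic identity combining everything
  have key : (∑ a : A, ((n (h a) : ℝ) * q (h a)) * (R a ^ 2 / 2 - 2 * R a + 2) * (n (t a) : ℝ))
      - (∑ a : A, ((n (t a) : ℝ) * q (t a)) * (R a ^ 2 / 2) * (n (h a) : ℝ))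
      + ((∑ a : A, (R a - 1) * (n (h a) : ℝ) * ((n (t a) : ℝ) * q (t a)))
        + (∑ a : A, (R a - 1) * (n (t a) : ℝ) * ((n (h a) : ℝ) * q (h a))))
      = (1/2) * (∑ a : A, (n (t a) : ℝ) * (n (h a) : ℝ) * (R a - 1) ^ 2 * (q (h a) - q (t a)))
      + (1/2) * (∑ a : A, (n (t a) : ℝ) * (n (h a) : ℝ) * (q (h a) - q (t a))) := by
    simp only [Finset.mul_sum, ← Finset.sum_sub_distrib, ← Finset.sum_add_distrib]
    exact Finset.sum_congr rfl fun a _ => by ring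
  rw [hTrB, hTrR2B] at key
  linarith [key, E3]
end

section
/- Let Q be a finite quiver with positive rank function n and R-charge function R : A → ℝ satisfying the NSVZ condition, and let q, q' : V → ℝ be two baryonic charges. Then the vectors φ, φ' with components φ_v = n_v q(v) and φ'_v = n_v q'(v) satisfy φᵀ D⁽¹⁾ φ' = − Σ_{a∈A} n_{t(a)} n_{h(a)} (R(a)−1) (q(h(a)) − q(t(a))) (q'(h(a)) − q'(t(a))). In particular φᵀ D⁽¹⁾ φ' equals minus the mixed baryonic anomaly Tr R B B' computed with fermionic R-charges R(a)−1 and baryonic charges B(a) = q(h(a)) − q(t(a)), B'(a) = q'(h(a)) − q'(t(a)). -/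
open Finset Matrix

/-- Collapse a sum over `w` of an inner sum with condition `P a ∧ p a = w`. -/
lemma collapseL {V A : Type*} [Fintype V] [Fintype A] [DecidableEq V]
    (p : A → V) (P : A → Prop) [DecidablePred P] (c : A → ℝ) (g : V → ℝ) :
    ∑ w : V, (∑ a : A, if P a ∧ p a = w then c a else 0) * g w
      = ∑ a : A, if P a then c a * g (p a) else 0 := by
  calc ∑ w : V, (∑ a : A, if P a ∧ p a = w then c a else 0) * g w
      = ∑ w : V, ∑ a : A, (if P a ∧ p a = w then c a * g w else 0) := by
        refine Finset.sum_congr rfl fun w _ => ?_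
        rw [Finset.sum_mul]
        refine Finset.sum_congr rfl fun a _ => ?_
        by_cases hp : P a ∧ p a = w <;> simp [hp]
    _ = ∑ a : A, ∑ w : V, (if P a ∧ p a = w then c a * g w else 0) := Finset.sum_comm
    _ = ∑ a : A, if P a then c a * g (p a) else 0 := by
        refine Finset.sum_congr rfl fun a _ => ?_
        by_cases hP : P a <;> simp [hP]

/-- Collapse a sum over `w` of an inner sum with condition `p a = w ∧ P a`. -/
lemma collapseR {V A : Type*} [Fintype V] [Fintype A] [DecidableEq V]
    (p : A → V) (P : A → Prop) [DecidablePred P] (c : A → ℝ) (g : V → ℝ) :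
    ∑ w : V, (∑ a : A, if p a = w ∧ P a then c a else 0) * g w
      = ∑ a : A, if P a then c a * g (p a) else 0 := by
  have : ∀ w a, (if p a = w ∧ P a then c a else 0) = (if P a ∧ p a = w then c a else 0) := by
    intro w a; by_cases hp : p a = w ∧ P a
    · simp [hp.1, hp.2]
    · rw [if_neg hp, if_neg (fun hq => hp ⟨hq.2, hq.1⟩)]
  simp only [this]
  exact collapseL p P c g

/-- Collapse `∑ v, f v * (∑ a, if p a = v then c a else 0)`. -/
lemma collapseS {V A : Type*} [Fintype V] [Fintype A] [DecidableEq V]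
    (p : A → V) (c : A → ℝ) (f : V → ℝ) :
    ∑ v : V, f v * (∑ a : A, if p a = v then c a else 0)
      = ∑ a : A, c a * f (p a) := by
  calc ∑ v : V, f v * (∑ a : A, if p a = v then c a else 0)
      = ∑ v : V, ∑ a : A, (if p a = v then c a * f v else 0) := by
        refine Finset.sum_congr rfl fun v _ => ?_
        rw [Finset.mul_sum]
        refine Finset.sum_congr rfl fun a _ => ?_
        by_cases hp : p a = v <;> simp [hp, mul_comm]
    _ = ∑ a : A, ∑ v : V, (if p a = v then c a * f v else 0) := Finset.sum_comm
    _ = ∑ a : A, c a * f (p a) := by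
        refine Finset.sum_congr rfl fun a _ => ?_
        simp

/-- For two baryonic charges `q`, `q'`, the baryonic vectors
`φ_v = n_v q(v)` and `φ'_v = n_v q'(v)` satisfy
`φᵀ D⁽¹⁾ φ' = − Σ_a n_{t(a)} n_{h(a)} (R(a)−1)(q(h(a))−q(t(a)))(q'(h(a))−q'(t(a)))`,
i.e. minus the mixed baryonic anomaly `Tr R B B'`. -/
theorem baryonic_D1_mixed_anomaly
    {V A : Type*} [Fintype V] [Fintype A] [DecidableEq V]
    (h t : A → V) (n : V → ℕ) (hn : ∀ v, 0 < n v) (R : A → ℝ)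
    (nsvz : ∀ v : V, 2 * (n v : ℝ)
      + (∑ a : A, if t a = v then (R a - 1) * (n (h a) : ℝ) else 0)
      + (∑ a : A, if h a = v then (R a - 1) * (n (t a) : ℝ) else 0) = 0)
    (q q' : V → ℝ)
    (hbar : ∀ v : V, ∑ a : A, (if h a = v then (n (t a) : ℝ) * q (t a) else 0)
      = ∑ a : A, (if t a = v then (n (h a) : ℝ) * q (h a) else 0))
    (hbar' : ∀ v : V, ∑ a : A, (if h a = v then (n (t a) : ℝ) * q' (t a) else 0)
      = ∑ a : A, (if t a = v then (n (h a) : ℝ) * q' (h a) else 0))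
    (D1 : Matrix V V ℝ)
    (hD1 : ∀ v w : V, D1 v w =
      2 * (if v = w then (1 : ℝ) else 0)
      + (∑ a : A, if t a = v ∧ h a = w then R a else 0)
      + ∑ a : A, if t a = w ∧ h a = v then R a - 2 else 0) :
    (fun v => (n v : ℝ) * q v) ⬝ᵥ (D1 *ᵥ fun v => (n v : ℝ) * q' v)
      = -∑ a : A, (n (t a) : ℝ) * (n (h a) : ℝ) * (R a - 1)
          * (q (h a) - q (t a)) * (q' (h a) - q' (t a)) := by
  classical
  set T : ℝ := ∑ v : V, (n v : ℝ) * (n v : ℝ) * q v * q' v with hTdef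
  -- Step 1: compute the matrix-vector product componentwise
  have hMv : ∀ v : V, (D1 *ᵥ fun w => (n w : ℝ) * q' w) v
      = 2 * ((n v : ℝ) * q' v)
        + (∑ a : A, if t a = v then R a * ((n (h a) : ℝ) * q' (h a)) else 0)
        + (∑ a : A, if h a = v then (R a - 2) * ((n (t a) : ℝ) * q' (t a)) else 0) := by
    intro v
    simp only [mulVec, dotProduct]
    calc ∑ w : V, D1 v w * ((n w : ℝ) * q' w)
        = (∑ w : V, (2 * (if v = w then (1:ℝ) else 0)) * ((n w : ℝ) * q' w))
          + (∑ w : V, (∑ a : A, if t a = v ∧ h a = w then R a else 0) * ((n w : ℝ) * q' w))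
          + (∑ w : V, (∑ a : A, if t a = w ∧ h a = v then R a - 2 else 0)
              * ((n w : ℝ) * q' w)) := by
          rw [← Finset.sum_add_distrib, ← Finset.sum_add_distrib]
          refine Finset.sum_congr rfl fun w _ => ?_
          rw [hD1 v w]; ring
      _ = 2 * ((n v : ℝ) * q' v)
          + (∑ a : A, if t a = v then R a * ((n (h a) : ℝ) * q' (h a)) else 0)
          + (∑ a : A, if h a = v then (R a - 2) * ((n (t a) : ℝ) * q' (t a)) else 0) := by
          congr 1
          · congr 1
            · simp [mul_ite, ite_mul]
            · exact collapseL h (fun a => t a = v) R (fun w => (n w : ℝ) * q' w)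
          · exact collapseR t (fun a => h a = v) (fun a => R a - 2) (fun w => (n w : ℝ) * q' w)
  -- Step 2: collapse the full quadratic form to sums over arrows
  have hLHS : (fun v => (n v : ℝ) * q v) ⬝ᵥ (D1 *ᵥ fun v => (n v : ℝ) * q' v)
      = 2 * T
        + (∑ a : A, (R a * ((n (h a) : ℝ) * q' (h a))) * ((n (t a) : ℝ) * q (t a)))
        + (∑ a : A, ((R a - 2) * ((n (t a) : ℝ) * q' (t a))) * ((n (h a) : ℝ) * q (h a))) := by
    simp only [dotProduct, hMv]
    calc ∑ v : V, ((n v : ℝ) * q v) *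
          (2 * ((n v : ℝ) * q' v)
            + (∑ a : A, if t a = v then R a * ((n (h a) : ℝ) * q' (h a)) else 0)
            + (∑ a : A, if h a = v then (R a - 2) * ((n (t a) : ℝ) * q' (t a)) else 0))
        = (∑ v : V, 2 * ((n v : ℝ) * (n v : ℝ) * q v * q' v))
          + (∑ v : V, ((n v : ℝ) * q v)
              * (∑ a : A, if t a = v then R a * ((n (h a) : ℝ) * q' (h a)) else 0))
          + (∑ v : V, ((n v : ℝ) * q v)
              * (∑ a : A, if h a = v then (R a - 2) * ((n (t a) : ℝ) * q' (t a)) else 0)) := by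
          rw [← Finset.sum_add_distrib, ← Finset.sum_add_distrib]
          refine Finset.sum_congr rfl fun v _ => ?_; ring
      _ = 2 * T
          + (∑ a : A, (R a * ((n (h a) : ℝ) * q' (h a))) * ((n (t a) : ℝ) * q (t a)))
          + (∑ a : A, ((R a - 2) * ((n (t a) : ℝ) * q' (t a))) * ((n (h a) : ℝ) * q (h a))) := by
          congr 1
          · congr 1
            · rw [hTdef, Finset.mul_sum]
            · exact collapseS t (fun a => R a * ((n (h a) : ℝ) * q' (h a)))
                (fun v => (n v : ℝ) * q v)
          · exact collapseS h (fun a => (R a - 2) * ((n (t a) : ℝ) * q' (t a)))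
              (fun v => (n v : ℝ) * q v)
  -- Step 3: NSVZ weighted by n_v q_v q'_v
  have I2 : (∑ a : A, ((R a - 1) * (n (h a) : ℝ))
        * ((n (t a) : ℝ) * q (t a) * q' (t a)))
      + (∑ a : A, ((R a - 1) * (n (t a) : ℝ))
        * ((n (h a) : ℝ) * q (h a) * q' (h a))) = -(2 * T) := by
    have h0 : ∑ v : V, ((n v : ℝ) * q v * q' v)
        * (2 * (n v : ℝ)
          + (∑ a : A, if t a = v then (R a - 1) * (n (h a) : ℝ) else 0)
          + (∑ a : A, if h a = v then (R a - 1) * (n (t a) : ℝ) else 0)) = 0 := by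
      refine Finset.sum_eq_zero fun v _ => ?_
      rw [nsvz v, mul_zero]
    have h1 : ∑ v : V, ((n v : ℝ) * q v * q' v)
        * (2 * (n v : ℝ)
          + (∑ a : A, if t a = v then (R a - 1) * (n (h a) : ℝ) else 0)
          + (∑ a : A, if h a = v then (R a - 1) * (n (t a) : ℝ) else 0))
        = 2 * T
          + (∑ a : A, ((R a - 1) * (n (h a) : ℝ)) * ((n (t a) : ℝ) * q (t a) * q' (t a)))
          + (∑ a : A, ((R a - 1) * (n (t a) : ℝ)) * ((n (h a) : ℝ) * q (h a) * q' (h a))) := by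
      calc ∑ v : V, ((n v : ℝ) * q v * q' v)
            * (2 * (n v : ℝ)
              + (∑ a : A, if t a = v then (R a - 1) * (n (h a) : ℝ) else 0)
              + (∑ a : A, if h a = v then (R a - 1) * (n (t a) : ℝ) else 0))
          = (∑ v : V, 2 * ((n v : ℝ) * (n v : ℝ) * q v * q' v))
            + (∑ v : V, ((n v : ℝ) * q v * q' v)
                * (∑ a : A, if t a = v then (R a - 1) * (n (h a) : ℝ) else 0))
            + (∑ v : V, ((n v : ℝ) * q v * q' v)
                * (∑ a : A, if h a = v then (R a - 1) * (n (t a) : ℝ) else 0)) := by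
            rw [← Finset.sum_add_distrib, ← Finset.sum_add_distrib]
            refine Finset.sum_congr rfl fun v _ => ?_; ring
        _ = _ := by
            congr 1
            · congr 1
              · rw [hTdef, Finset.mul_sum]
              · exact collapseS t (fun a => (R a - 1) * (n (h a) : ℝ))
                  (fun v => (n v : ℝ) * q v * q' v)
            · exact collapseS h (fun a => (R a - 1) * (n (t a) : ℝ))
                (fun v => (n v : ℝ) * q v * q' v)
    rw [h1] at h0
    linarith [h0]
  -- Step 4: baryonic identity weighted by n_v q'_v
  have I1 : ∑ a : A, ((n (t a) : ℝ) * q (t a)) * ((n (h a) : ℝ) * q' (h a))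
      = ∑ a : A, ((n (h a) : ℝ) * q (h a)) * ((n (t a) : ℝ) * q' (t a)) := by
    have h0 : ∑ v : V, ((n v : ℝ) * q' v)
          * (∑ a : A, if h a = v then (n (t a) : ℝ) * q (t a) else 0)
        = ∑ v : V, ((n v : ℝ) * q' v)
          * (∑ a : A, if t a = v then (n (h a) : ℝ) * q (h a) else 0) := by
      refine Finset.sum_congr rfl fun v _ => ?_
      rw [hbar v]
    rw [collapseS h (fun a => (n (t a) : ℝ) * q (t a)) (fun v => (n v : ℝ) * q' v),
        collapseS t (fun a => (n (h a) : ℝ) * q (h a)) (fun v => (n v : ℝ) * q' v)] at h0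
    calc ∑ a : A, ((n (t a) : ℝ) * q (t a)) * ((n (h a) : ℝ) * q' (h a))
        = ∑ a : A, ((n (t a) : ℝ) * q (t a)) * ((fun v => (n v : ℝ) * q' v) (h a)) := rfl
      _ = ∑ a : A, ((n (h a) : ℝ) * q (h a)) * ((fun v => (n v : ℝ) * q' v) (t a)) := h0
      _ = _ := rfl
  -- Step 5: combine everything with a per-arrow ring identity
  rw [hLHS]
  have key : ∑ a : A,
      ((R a * ((n (h a) : ℝ) * q' (h a))) * ((n (t a) : ℝ) * q (t a))
        + ((R a - 2) * ((n (t a) : ℝ) * q' (t a))) * ((n (h a) : ℝ) * q (h a))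
        - ((R a - 1) * (n (h a) : ℝ)) * ((n (t a) : ℝ) * q (t a) * q' (t a))
        - ((R a - 1) * (n (t a) : ℝ)) * ((n (h a) : ℝ) * q (h a) * q' (h a))
        + ((n (h a) : ℝ) * q (h a)) * ((n (t a) : ℝ) * q' (t a))
        - ((n (t a) : ℝ) * q (t a)) * ((n (h a) : ℝ) * q' (h a))
        + (n (t a) : ℝ) * (n (h a) : ℝ) * (R a - 1)
            * (q (h a) - q (t a)) * (q' (h a) - q' (t a))) = 0 := by
    refine Finset.sum_eq_zero fun a _ => ?_
    ring
  simp only [Finset.sum_add_distrib, Finset.sum_sub_distrib] at key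
  linarith [key, I1, I2]
end

section
/- Let a, b, c, d ∈ ℝ with a + b + c + d = 2, and set x = b + c, y = a + c. For t > 0, define the 2×2 real matrix D(t) with entries D₁₁ = D₂₂ = 1 − t², D₁₂ = −t^a − t^b + t^{2−c} + t^{2−d}, D₂₁ = −t^c − t^d + t^{2−a} + t^{2−b}. Then det D(t) = (1 − t^x)(1 − t^{2−x})(1 − t^y)(1 − t^{2−y}); consequently, whenever det D(t) ≠ 0, the (1,1) entry of D(t)⁻¹ equals (1 − t²)/((1 − t^x)(1 − t^{2−x})(1 − t^y)(1 − t^{2−y})). -/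
open Matrix

/-- For the conifold quiver with trial R-charges `a+b+c+d = 2`
and `x = b+c`, `y = a+c`, the denominator matrix `D(t)` has determinant
`(1 − t^x)(1 − t^{2−x})(1 − t^y)(1 − t^{2−y})`, and whenever this is nonzero
the `(1,1)` entry of `D(t)⁻¹` is
`(1 − t²)/((1 − t^x)(1 − t^{2−x})(1 − t^y)(1 − t^{2−y}))`. -/
theorem conifold_denominator_det_and_inverse
    (a b c d : ℝ) (hsum : a + b + c + d = 2)
    (x y : ℝ) (hx : x = b + c) (hy : y = a + c)
    (t : ℝ) (ht : 0 < t)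
    (D : Matrix (Fin 2) (Fin 2) ℝ)
    (hD : D = !![1 - t ^ (2 : ℝ), -(t ^ a) - t ^ b + t ^ (2 - c) + t ^ (2 - d);
                 -(t ^ c) - t ^ d + t ^ (2 - a) + t ^ (2 - b), 1 - t ^ (2 : ℝ)]) :
    D.det = (1 - t ^ x) * (1 - t ^ (2 - x)) * (1 - t ^ y) * (1 - t ^ (2 - y))
    ∧ (D.det ≠ 0 →
        D⁻¹ 0 0 = (1 - t ^ (2 : ℝ))
          / ((1 - t ^ x) * (1 - t ^ (2 - x)) * (1 - t ^ y) * (1 - t ^ (2 - y)))) := by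
  have e2 : (2 : ℝ) = a + b + c + d := hsum.symm
  have hne := ht.ne'
  have h2 : t ^ (2 : ℝ) = t ^ a * t ^ b * t ^ c * t ^ d := by
    rw [e2, Real.rpow_add ht, Real.rpow_add ht, Real.rpow_add ht]
  have hca : t ^ (2 - c) = t ^ a * t ^ b * t ^ d := by
    have : (2 : ℝ) - c = a + b + d := by linarith
    rw [this, Real.rpow_add ht, Real.rpow_add ht]
  have hcd : t ^ (2 - d) = t ^ a * t ^ b * t ^ c := by
    have : (2 : ℝ) - d = a + b + c := by linarith
    rw [this, Real.rpow_add ht, Real.rpow_add ht]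
  have hcaa : t ^ (2 - a) = t ^ b * t ^ c * t ^ d := by
    have : (2 : ℝ) - a = b + c + d := by linarith
    rw [this, Real.rpow_add ht, Real.rpow_add ht]
  have hcb : t ^ (2 - b) = t ^ a * t ^ c * t ^ d := by
    have : (2 : ℝ) - b = a + c + d := by linarith
    rw [this, Real.rpow_add ht, Real.rpow_add ht]
  have hxv : t ^ x = t ^ b * t ^ c := by rw [hx, Real.rpow_add ht]
  have hxv' : t ^ (2 - x) = t ^ a * t ^ d := by
    have : (2 : ℝ) - x = a + d := by rw [hx]; linarith
    rw [this, Real.rpow_add ht]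
  have hyv : t ^ y = t ^ a * t ^ c := by rw [hy, Real.rpow_add ht]
  have hyv' : t ^ (2 - y) = t ^ b * t ^ d := by
    have : (2 : ℝ) - y = b + d := by rw [hy]; linarith
    rw [this, Real.rpow_add ht]
  have hdet : D.det = (1 - t ^ x) * (1 - t ^ (2 - x)) * (1 - t ^ y) * (1 - t ^ (2 - y)) := by
    rw [hD, Matrix.det_fin_two_of, h2, hca, hcd, hcaa, hcb, hxv, hxv', hyv, hyv']
    ring
  refine ⟨hdet, fun hne0 => ?_⟩
  have hinv : D⁻¹ 0 0 = D.det⁻¹ * D 1 1 := by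
    rw [Matrix.inv_def, Matrix.smul_apply, smul_eq_mul]
    rw [Matrix.adjugate_fin_two D]
    simp
  rw [hinv, hdet]
  have : D 1 1 = 1 - t ^ (2 : ℝ) := by rw [hD]; simp
  rw [this, ← hdet]
  field_simp
end

section
/- Let Q be a finite quiver with positive rank function n and R-charge function R : A → ℝ satisfying the NSVZ condition, and let q : V → ℝ be a baryonic charge. Then the vector φ with components φ_v = n_v q(v) satisfies φᵀ D⁽¹⁾ φ = − Σ_{a∈A} n_{t(a)} n_{h(a)} (R(a)−1)(q(h(a)) − q(t(a)))². Consequently, if Σ_{a∈A} n_{t(a)} n_{h(a)} (R(a)−1)(q(h(a)) − q(t(a)))² < 0 (negative definiteness of the Tr R B B anomaly), then φᵀ D⁽¹⁾ φ > 0. -/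
open Finset Matrix

private lemma quiver_quadform_expand
    {V A : Type*} [Fintype V] [Fintype A] [DecidableEq V]
    (h t : A → V) (φ : V → ℝ) (R : A → ℝ)
    (D1 : Matrix V V ℝ)
    (hD1 : ∀ v w : V, D1 v w =
      2 * (if v = w then (1 : ℝ) else 0)
      + (∑ a : A, if t a = v ∧ h a = w then R a else 0)
      + ∑ a : A, if t a = w ∧ h a = v then R a - 2 else 0) :
    φ ⬝ᵥ (D1 *ᵥ φ) = 2 * ∑ v, φ v ^ 2 + ∑ a, (2 * R a - 2) * (φ (t a) * φ (h a)) := by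
  classical
  have e : φ ⬝ᵥ (D1 *ᵥ φ) = ∑ v, ∑ w, φ v * (D1 v w * φ w) := by
    simp [dotProduct, mulVec, Finset.mul_sum]
  rw [e]
  have e2 : ∀ v w : V, φ v * (D1 v w * φ w)
      = 2 * (if v = w then φ v * φ w else 0)
        + (∑ a, if t a = v ∧ h a = w then R a * (φ v * φ w) else 0)
        + ∑ a, if t a = w ∧ h a = v then (R a - 2) * (φ v * φ w) else 0 := by
    intro v w
    rw [hD1, add_mul, add_mul, mul_add, mul_add]
    congr 1
    · congr 1
      · split_ifs <;> ring
      · rw [Finset.sum_mul, Finset.mul_sum]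
        exact Finset.sum_congr rfl fun a _ => by split_ifs <;> ring
    · rw [Finset.sum_mul, Finset.mul_sum]
      exact Finset.sum_congr rfl fun a _ => by split_ifs <;> ring
  simp only [e2, Finset.sum_add_distrib]
  have T1 : ∑ v : V, ∑ w : V, (2 * if v = w then φ v * φ w else 0) = 2 * ∑ v, φ v ^ 2 := by
    simp [Finset.sum_ite_eq, Finset.mul_sum, sq]
  have swap : ∀ f : A → V → V → ℝ,
      (∑ v : V, ∑ w : V, ∑ a : A, f a v w) = ∑ a : A, ∑ v : V, ∑ w : V, f a v w := by
    intro f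
    have : (∑ v : V, ∑ w : V, ∑ a : A, f a v w) = ∑ v : V, ∑ a : A, ∑ w : V, f a v w :=
      Finset.sum_congr rfl fun v _ => Finset.sum_comm
    rw [this, Finset.sum_comm]
  have T2 : (∑ v : V, ∑ w : V, ∑ a : A, if t a = v ∧ h a = w then R a * (φ v * φ w) else 0)
      = ∑ a, R a * (φ (t a) * φ (h a)) := by
    rw [swap]
    exact Finset.sum_congr rfl fun a _ => by simp [ite_and, Finset.sum_ite_eq]
  have T3 : (∑ v : V, ∑ w : V, ∑ a : A, if t a = w ∧ h a = v then (R a - 2) * (φ v * φ w) else 0)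
      = ∑ a, (R a - 2) * (φ (h a) * φ (t a)) := by
    rw [swap]
    refine Finset.sum_congr rfl fun a _ => ?_
    rw [Finset.sum_comm]
    simp [ite_and, Finset.sum_ite_eq]
  rw [T1, T2, T3, add_assoc, ← Finset.sum_add_distrib]
  exact congrArg _ (Finset.sum_congr rfl fun a _ => by ring)

private lemma quiver_nsvz_identity
    {V A : Type*} [Fintype V] [Fintype A] [DecidableEq V]
    (h t : A → V) (n : V → ℕ) (R : A → ℝ) (q : V → ℝ)
    (nsvz : ∀ v : V, 2 * (n v : ℝ)
      + (∑ a : A, if t a = v then (R a - 1) * (n (h a) : ℝ) else 0)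
      + (∑ a : A, if h a = v then (R a - 1) * (n (t a) : ℝ) else 0) = 0) :
    2 * ∑ v, ((n v : ℝ) * q v) ^ 2
      = -∑ a, (R a - 1) * ((n (t a) : ℝ) * (n (h a) : ℝ) * q (t a) ^ 2
          + (n (t a) : ℝ) * (n (h a) : ℝ) * q (h a) ^ 2) := by
  classical
  have key : ∑ v, (n v : ℝ) * q v ^ 2 *
      (2 * (n v : ℝ)
        + (∑ a : A, if t a = v then (R a - 1) * (n (h a) : ℝ) else 0)
        + (∑ a : A, if h a = v then (R a - 1) * (n (t a) : ℝ) else 0)) = 0 := by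
    simp [nsvz]
  have expand : ∑ v, (n v : ℝ) * q v ^ 2 *
      (2 * (n v : ℝ)
        + (∑ a : A, if t a = v then (R a - 1) * (n (h a) : ℝ) else 0)
        + (∑ a : A, if h a = v then (R a - 1) * (n (t a) : ℝ) else 0))
      = 2 * ∑ v, ((n v : ℝ) * q v) ^ 2
        + (∑ a, (n (t a) : ℝ) * q (t a) ^ 2 * ((R a - 1) * (n (h a) : ℝ)))
        + ∑ a, (n (h a) : ℝ) * q (h a) ^ 2 * ((R a - 1) * (n (t a) : ℝ)) := by
    simp only [mul_add, Finset.sum_add_distrib]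
    congr 1
    · congr 1
      · rw [Finset.mul_sum]; exact Finset.sum_congr rfl fun v _ => by ring
      · simp only [Finset.mul_sum, mul_ite, mul_zero]
        rw [Finset.sum_comm]
        simp
    · simp only [Finset.mul_sum, mul_ite, mul_zero]
      rw [Finset.sum_comm]
      simp
  rw [expand] at key
  have comb : (∑ a : A, (n (t a) : ℝ) * q (t a) ^ 2 * ((R a - 1) * (n (h a) : ℝ)))
      + (∑ a : A, (n (h a) : ℝ) * q (h a) ^ 2 * ((R a - 1) * (n (t a) : ℝ)))
      = ∑ a, (R a - 1) * ((n (t a) : ℝ) * (n (h a) : ℝ) * q (t a) ^ 2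
          + (n (t a) : ℝ) * (n (h a) : ℝ) * q (h a) ^ 2) := by
    rw [← Finset.sum_add_distrib]
    exact Finset.sum_congr rfl fun a _ => by ring
  linarith [key, comb]

/-- Positivity: for a baryonic charge `q`, the vector
`φ_v = n_v q(v)` satisfies
`φᵀ D⁽¹⁾ φ = − Σ_a n_{t(a)} n_{h(a)} (R(a)−1)(q(h(a))−q(t(a)))²`; hence if the
`Tr R B B` anomaly is negative, then `φᵀ D⁽¹⁾ φ > 0`. -/
theorem baryonic_D1_positivity
    {V A : Type*} [Fintype V] [Fintype A] [DecidableEq V]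
    (h t : A → V) (n : V → ℕ) (hn : ∀ v, 0 < n v) (R : A → ℝ)
    (nsvz : ∀ v : V, 2 * (n v : ℝ)
      + (∑ a : A, if t a = v then (R a - 1) * (n (h a) : ℝ) else 0)
      + (∑ a : A, if h a = v then (R a - 1) * (n (t a) : ℝ) else 0) = 0)
    (q : V → ℝ)
    (hbar : ∀ v : V, ∑ a : A, (if h a = v then (n (t a) : ℝ) * q (t a) else 0)
      = ∑ a : A, (if t a = v then (n (h a) : ℝ) * q (h a) else 0))
    (D1 : Matrix V V ℝ)
    (hD1 : ∀ v w : V, D1 v w =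
      2 * (if v = w then (1 : ℝ) else 0)
      + (∑ a : A, if t a = v ∧ h a = w then R a else 0)
      + ∑ a : A, if t a = w ∧ h a = v then R a - 2 else 0) :
    (fun v => (n v : ℝ) * q v) ⬝ᵥ (D1 *ᵥ fun v => (n v : ℝ) * q v)
      = -∑ a : A, (n (t a) : ℝ) * (n (h a) : ℝ) * (R a - 1) * (q (h a) - q (t a)) ^ 2
    ∧ ((∑ a : A, (n (t a) : ℝ) * (n (h a) : ℝ) * (R a - 1) * (q (h a) - q (t a)) ^ 2 < 0) →
        0 < (fun v => (n v : ℝ) * q v) ⬝ᵥ (D1 *ᵥ fun v => (n v : ℝ) * q v)) := by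
  classical
  have hmain : (fun v => (n v : ℝ) * q v) ⬝ᵥ (D1 *ᵥ fun v => (n v : ℝ) * q v)
      = -∑ a : A, (n (t a) : ℝ) * (n (h a) : ℝ) * (R a - 1) * (q (h a) - q (t a)) ^ 2 := by
    rw [quiver_quadform_expand h t (fun v => (n v : ℝ) * q v) R D1 hD1,
      quiver_nsvz_identity h t n R q nsvz]
    have comb : (∑ a : A, (2 * R a - 2)
          * (((n (t a) : ℝ) * q (t a)) * ((n (h a) : ℝ) * q (h a))))
        - (∑ a : A, (R a - 1) * ((n (t a) : ℝ) * (n (h a) : ℝ) * q (t a) ^ 2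
            + (n (t a) : ℝ) * (n (h a) : ℝ) * q (h a) ^ 2))
        + ∑ a : A, (n (t a) : ℝ) * (n (h a) : ℝ) * (R a - 1) * (q (h a) - q (t a)) ^ 2
        = 0 := by
      rw [← Finset.sum_sub_distrib, ← Finset.sum_add_distrib]
      rw [show (0 : ℝ) = ∑ _a : A, (0 : ℝ) by simp]
      exact Finset.sum_congr rfl fun a _ => by ring
    linarith [comb]
  refine ⟨hmain, fun hneg => ?_⟩
  rw [hmain]
  linarith
end
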